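/- arXiv:2306.03655 — 2 statements merged into one kernel-verified Lean document; each statement's English description precedes it below -/
import Mathlib

section
/- Suppose for a sequence of reals (a_t)_{t≥1}: a_{t+1} ≥ (1 - αη_t) a_t - η_t² K whenever a_t ≤ 0, and a_{t+1} ≥ -c η_{t+1} whenever a_t > 0, where η_t = 1/(α√(t+d)), a_1 ≥ -c η_1, and c ≥ K/α · 3 with α > 0, K > 0, d ≥ 0. Then a_t ≥ -c η_t for all t ≥ 1. -/
/-!
Induction on `t`. If `a t > 0` the second recursion gives the bound directly. If `a t ≤ 0`, the
first recursion is monotone in `a t` (as `α η t ≤ 1`), so it suffices that the barrier `-c η`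
itself is carried to the next step; this reduces to `η t - η (t + 1) ≤ (2/3) α (η t)²`, which
follows from `1/√s - 1/√(s+1) ≤ 1/(2 s √s)` and `3 K ≤ c α`.
-/

open Real

theorem inv_sqrt_sub_inv_sqrt_add_one_le {s : ℝ} (hs : 0 < s) :
    (√s)⁻¹ - (√(s + 1))⁻¹ ≤ (2 * s * √s)⁻¹ := by
  have hu : 0 < √s := sqrt_pos.2 hs
  have huv : √s ≤ √(s + 1) := sqrt_le_sqrt (by linarith)
  have hsq : √(s + 1) ^ 2 = s + 1 := sq_sqrt (by linarith)
  have hs' : s = √s ^ 2 := (sq_sqrt hs.le).symm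
  generalize √s = u at *
  generalize √(s + 1) = v at *
  subst hs'
  have hv : 0 < v := hu.trans_le huv
  rw [inv_sub_inv hu.ne' hv.ne', div_le_iff₀ (by positivity), ← div_eq_inv_mul,
    le_div_iff₀ (by positivity)]
  nlinarith [mul_le_mul_of_nonneg_left huv hu.le]

section StepSize

variable {α s : ℝ}

theorem mul_one_div_mul_sqrt_le_one (hα : 0 < α) (hs : 1 ≤ s) : α * (1 / (α * √s)) ≤ 1 := by
  rw [mul_one_div, div_le_one (by positivity), le_mul_iff_one_le_right hα]
  exact one_le_sqrt.2 hs

theorem one_div_mul_sqrt_sub_one_div_mul_sqrt_add_one_le (hα : 0 < α) (hs : 1 ≤ s) :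
    1 / (α * √s) - 1 / (α * √(s + 1)) ≤ 2 / 3 * α * (1 / (α * √s)) ^ 2 := by
  have h1 : 1 ≤ √s := one_le_sqrt.2 hs
  have hinv : (2 * s * √s)⁻¹ ≤ (2 * s)⁻¹ :=
    inv_anti₀ (by positivity) (le_mul_of_one_le_right (by positivity) h1)
  calc 1 / (α * √s) - 1 / (α * √(s + 1)) = α⁻¹ * ((√s)⁻¹ - (√(s + 1))⁻¹) := by ring
    _ ≤ α⁻¹ * (2 * s)⁻¹ := by
      gcongr
      exact (inv_sqrt_sub_inv_sqrt_add_one_le (by linarith)).trans hinv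
    _ ≤ 2 / 3 * α * (1 / (α * √s)) ^ 2 := by
      rw [div_pow, mul_pow, sq_sqrt (by linarith)]
      field_simp
      linarith

end StepSize

theorem lower_barrier_step {α K c η η' a : ℝ} (hη : 0 < η) (hαη : α * η ≤ 1)
    (hdecay : η - η' ≤ 2 / 3 * α * η ^ 2) (hKc : 3 * K ≤ c * α) (ha : -c * η ≤ a)
    (ha0 : a ≤ 0) :
    -c * η' ≤ (1 - α * η) * a - η ^ 2 * K := by
  have hc : 0 ≤ c := by nlinarith
  have hscaled : (1 - α * η) * (-c * η) ≤ (1 - α * η) * a :=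
    mul_le_mul_of_nonneg_left ha (by linarith)
  nlinarith [mul_le_mul_of_nonneg_left hdecay hc, mul_le_mul_of_nonneg_left hKc (sq_nonneg η)]

theorem stmt_14_general (α K c d : ℝ) (hα : 0 < α) (hd : 0 ≤ d)
    (hc : c ≥ 3 * K / α)
    (a : ℕ → ℝ) (η : ℕ → ℝ) (hη : ∀ t, η t = 1 / (α * Real.sqrt (t + d)))
    (hrec1 : ∀ t, 1 ≤ t → a t ≤ 0 → a (t + 1) ≥ (1 - α * η t) * a t - (η t) ^ 2 * K)
    (hrec2 : ∀ t, 1 ≤ t → 0 < a t → a (t + 1) ≥ -c * η (t + 1))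
    (hbase : a 1 ≥ -c * η 1) :
    ∀ t, 1 ≤ t → a t ≥ -c * η t := by
  have hKc : 3 * K ≤ c * α := by rwa [ge_iff_le, div_le_iff₀ hα] at hc
  intro t ht
  induction t, ht using Nat.le_induction with
  | base => exact hbase
  | succ t ht ih =>
    rcases le_or_gt (a t) 0 with hneg | hpos
    · have hs : 1 ≤ (t : ℝ) + d := by
        have : (1 : ℝ) ≤ t := by exact_mod_cast ht
        linarith
      have hηsucc : η (t + 1) = 1 / (α * √((t + d) + 1)) := by
        rw [hη]; push_cast; ring_nf
      refine le_trans ?_ (hrec1 t ht hneg)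
      rw [hη t] at ih ⊢
      rw [hηsucc]
      exact lower_barrier_step (div_pos one_pos (mul_pos hα (sqrt_pos.2 (by linarith))))
        (mul_one_div_mul_sqrt_le_one hα hs)
        (one_div_mul_sqrt_sub_one_div_mul_sqrt_add_one_le hα hs) hKc ih hneg
    · exact hrec2 t ht hpos

theorem stmt_14 (α K c d : ℝ) (hα : 0 < α) (hK : 0 < K) (hd : 0 ≤ d)
    (hc : c ≥ 3 * K / α)
    (a : ℕ → ℝ) (η : ℕ → ℝ) (hη : ∀ t, η t = 1 / (α * Real.sqrt (t + d)))
    (hrec1 : ∀ t, 1 ≤ t → a t ≤ 0 → a (t + 1) ≥ (1 - α * η t) * a t - (η t) ^ 2 * K)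
    (hrec2 : ∀ t, 1 ≤ t → 0 < a t → a (t + 1) ≥ -c * η (t + 1))
    (hbase : a 1 ≥ -c * η 1) :
    ∀ t, 1 ≤ t → a t ≥ -c * η t :=
  stmt_14_general α K c d hα hd hc a η hη hrec1 hrec2 hbase
end

section
/- If a sequence (x_t) in ℝⁿ satisfies for every t: ∇f_t(x_t)ᵀ(x_t - x*) ≤ (‖x_t - x*‖² - ‖x_{t+1} - x*‖²)/(2η_t) + (η_t/2)V², with η_t = 1/(α√(t+d)) decreasing, ‖x_t - x*‖ ≤ D for all t, and V, D, α > 0, d ≥ 0, then ∑_{t=1}^{T} ∇f_t(x_t)ᵀ(x_t - x*) ≤ V²√(T+d)/α + α D²√(T+d)/2 for all T ≥ 1. -/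
/-! Each step bound splits into a weighted telescoping term `(a_t - a_{t+1}) / (2 η_t)` with
`a_t = ‖x_t - x*‖²` and a noise term `η_t V² / 2`. Since the weights `1 / (2 η_t)` increase and
`0 ≤ a_t ≤ D²`, summation by parts bounds the first sum by `D² / (2 η_T)`; the second is controlled
by `1 / √(t + d) ≤ 2 (√(t + d) - √(t - 1 + d))`, which telescopes to `2 √(T + d)`. -/

open scoped RealInnerProductSpace

open Finset

theorem sum_Icc_mul_sub_succ_le {a b : ℕ → ℝ} {M : ℝ} (ha : ∀ t, 0 ≤ a t)
    (haM : ∀ t, 1 ≤ t → a t ≤ M) (hb : Monotone b) (hb0 : 0 ≤ b 0) (T : ℕ) :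
    ∑ t ∈ Icc 1 T, b t * (a t - a (t + 1)) ≤ b T * M := by
  suffices key : ∑ t ∈ Icc 1 T, b t * (a t - a (t + 1)) ≤ b T * (M - a (T + 1)) by
    nlinarith [ha (T + 1), hb0.trans (hb (Nat.zero_le T))]
  induction T with
  | zero =>
    simpa using mul_nonneg hb0 (sub_nonneg.mpr (haM 1 le_rfl))
  | succ T ih =>
    rw [sum_Icc_succ_top (by omega)]
    have hbT : b T ≤ b (T + 1) := hb (Nat.le_succ T)
    have haT : a (T + 1) ≤ M := haM (T + 1) (by omega)
    nlinarith [ih]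

theorem one_div_sqrt_add_one_le {u : ℝ} (hu : 0 ≤ u) :
    1 / √(u + 1) ≤ 2 * (√(u + 1) - √u) := by
  have hr : 0 < √(u + 1) := Real.sqrt_pos.mpr (by linarith)
  have hr2 : √(u + 1) ^ 2 = u + 1 := Real.sq_sqrt (by linarith)
  have hs2 : √u ^ 2 = u := Real.sq_sqrt hu
  rw [div_le_iff₀ hr]
  -- with `r = √(u + 1)`, `s = √u`: `2 r² - 2 r s - 1 = (r - s)²` because `r² = s² + 1`
  nlinarith [sq_nonneg (√(u + 1) - √u)]

theorem sum_Icc_one_div_sqrt_le {d : ℝ} (hd : 0 ≤ d) (T : ℕ) :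
    ∑ t ∈ Icc 1 T, 1 / √(t + d) ≤ 2 * √(T + d) := by
  induction T with
  | zero => simp [Real.sqrt_nonneg]
  | succ T ih =>
    rw [sum_Icc_succ_top (by omega)]
    have step := one_div_sqrt_add_one_le (show 0 ≤ (T : ℝ) + d by positivity)
    rw [show (T : ℝ) + d + 1 = ((T + 1 : ℕ) : ℝ) + d by push_cast; ring] at step
    linarith

theorem stmt_18_general {n : ℕ} (x : ℕ → EuclideanSpace ℝ (Fin n))
    (xstar : EuclideanSpace ℝ (Fin n)) (f : ℕ → EuclideanSpace ℝ (Fin n) → ℝ)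
    (V D α d : ℝ) (hα : 0 < α) (hd : 0 ≤ d)
    (η : ℕ → ℝ) (hη : ∀ t, η t = 1 / (α * Real.sqrt (t + d)))
    (hstep : ∀ t, 1 ≤ t →
      ⟪gradient (f t) (x t), x t - xstar⟫ ≤
        (‖x t - xstar‖ ^ 2 - ‖x (t + 1) - xstar‖ ^ 2) / (2 * η t) + η t / 2 * V ^ 2)
    (hbound : ∀ t, 1 ≤ t → ‖x t - xstar‖ ≤ D) :
    ∀ T, 1 ≤ T →
      ∑ t ∈ Finset.Icc 1 T, ⟪gradient (f t) (x t), x t - xstar⟫ ≤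
        V ^ 2 * Real.sqrt (T + d) / α + α * D ^ 2 * Real.sqrt (T + d) / 2 := by
  intro T _
  set a : ℕ → ℝ := fun t => ‖x t - xstar‖ ^ 2
  set b : ℕ → ℝ := fun t => α * √(t + d) / 2
  have hterm : ∀ t ∈ Icc 1 T, ⟪gradient (f t) (x t), x t - xstar⟫ ≤
      b t * (a t - a (t + 1)) + V ^ 2 / (2 * α) * (1 / √(t + d)) := by
    intro t ht
    convert hstep t (mem_Icc.mp ht).1 using 2 <;> simp only [a, b, hη t] <;> field_simp
  have hb : Monotone b := fun s t hst => by simp only [b]; gcongr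
  have haD : ∀ t, 1 ≤ t → a t ≤ D ^ 2 := fun t ht =>
    pow_le_pow_left₀ (norm_nonneg _) (hbound t ht) 2
  calc ∑ t ∈ Icc 1 T, ⟪gradient (f t) (x t), x t - xstar⟫
      ≤ ∑ t ∈ Icc 1 T, (b t * (a t - a (t + 1)) + V ^ 2 / (2 * α) * (1 / √(t + d))) :=
        sum_le_sum hterm
    _ = ∑ t ∈ Icc 1 T, b t * (a t - a (t + 1)) +
          V ^ 2 / (2 * α) * ∑ t ∈ Icc 1 T, 1 / √(t + d) := by
        rw [sum_add_distrib, mul_sum]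
    _ ≤ b T * D ^ 2 + V ^ 2 / (2 * α) * (2 * √(T + d)) := by
        gcongr
        · exact sum_Icc_mul_sub_succ_le (fun t => by positivity) haD hb (by positivity) T
        · exact sum_Icc_one_div_sqrt_le hd T
    _ = V ^ 2 * √(T + d) / α + α * D ^ 2 * √(T + d) / 2 := by
        simp only [b]
        ring

theorem stmt_18 {n : ℕ} (x : ℕ → EuclideanSpace ℝ (Fin n))
    (xstar : EuclideanSpace ℝ (Fin n)) (f : ℕ → EuclideanSpace ℝ (Fin n) → ℝ)
    (V D α d : ℝ) (hV : 0 < V) (hD : 0 < D) (hα : 0 < α) (hd : 0 ≤ d)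
    (η : ℕ → ℝ) (hη : ∀ t, η t = 1 / (α * Real.sqrt (t + d)))
    (hstep : ∀ t, 1 ≤ t →
      ⟪gradient (f t) (x t), x t - xstar⟫ ≤
        (‖x t - xstar‖ ^ 2 - ‖x (t + 1) - xstar‖ ^ 2) / (2 * η t) + η t / 2 * V ^ 2)
    (hbound : ∀ t, 1 ≤ t → ‖x t - xstar‖ ≤ D) :
    ∀ T, 1 ≤ T →
      ∑ t ∈ Finset.Icc 1 T, ⟪gradient (f t) (x t), x t - xstar⟫ ≤
        V ^ 2 * Real.sqrt (T + d) / α + α * D ^ 2 * Real.sqrt (T + d) / 2 :=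
  stmt_18_general x xstar f V D α d hα hd η hη hstep hbound
end
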